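/- Let μ, λ > 0 with μλ < 1, β ∈ (0,1), and α = μ, and define h(u) = 4β(α − μ)u² + 2[(μ − α)(1 + β)² + (λα − 1)αβ(1 + β)]u − 2μ(1 + β²) + 2α(1 + β)² − λα²β² − 2α(1 − β)β − λα²(1 + β)² (which for α = μ is an affine function of u with nonpositive slope 2(λμ − 1)μβ(1 + β)). Then max_{u ∈ [−1,1]} h(u) = h(−1), and h(u) ≤ 0 for all u ∈ [−1,1] if and only if 0 < β ≤ (−1 + μλ + √(1 − μλ))/(2(1 − μλ)). -/
import Mathlib


/-- The Nesterov frequency-domain quadratic `h(u)` (with `β₁ = β₂ = β`, `u = cos ω`). -/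
noncomputable def hNAG (μ lam α β u : ℝ) : ℝ :=
  4 * β * (α - μ) * u ^ 2 +
    2 * ((μ - α) * (1 + β) ^ 2 + (lam * α - 1) * α * β * (1 + β)) * u -
    2 * μ * (1 + β ^ 2) + 2 * α * (1 + β) ^ 2 - lam * α ^ 2 * β ^ 2 -
    2 * α * (1 - β) * β - lam * α ^ 2 * (1 + β) ^ 2

/-- In the case `α = μ` (with `μλ < 1`), the maximum of `h` on `[−1,1]` is
attained at `u = −1`, and `h ≤ 0` on `[−1,1]` iff
`0 < β ≤ (−1 + μλ + √(1 − μλ))/(2(1 − μλ))`. -/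
theorem nag_affine_case_characterization
    (μ lam β : ℝ) (hμ : 0 < μ) (hlam : 0 < lam) (hμlam : μ * lam < 1)
    (hβ : β ∈ Set.Ioo (0 : ℝ) 1) :
    (∀ u ∈ Set.Icc (-1 : ℝ) 1, hNAG μ lam μ β u ≤ hNAG μ lam μ β (-1)) ∧
    ((∀ u ∈ Set.Icc (-1 : ℝ) 1, hNAG μ lam μ β u ≤ 0) ↔
      (0 < β ∧ β ≤ (-1 + μ * lam + Real.sqrt (1 - μ * lam)) / (2 * (1 - μ * lam)))) := by
  obtain ⟨hβ0, hβ1⟩ := hβ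
  have ht1 : 0 < 1 - μ * lam := by linarith
  set s := Real.sqrt (1 - μ * lam) with hs
  have hs0 : 0 < s := Real.sqrt_pos.2 ht1
  have hs2 : s ^ 2 = 1 - μ * lam := Real.sq_sqrt ht1.le
  have key : ∀ u ∈ Set.Icc (-1 : ℝ) 1, hNAG μ lam μ β u ≤ hNAG μ lam μ β (-1) := by
    intro u hu
    obtain ⟨h1, h2⟩ := hu
    simp only [hNAG]
    nlinarith [mul_nonneg (mul_nonneg (mul_nonneg ht1.le hμ.le)
      (mul_nonneg hβ0.le (by linarith : (0:ℝ) ≤ 1 + β)))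
      (by linarith : (0:ℝ) ≤ u + 1)]
  refine ⟨key, ?_, ?_⟩
  · intro hall
    refine ⟨hβ0, ?_⟩
    have H := hall (-1) ⟨le_refl _, by norm_num⟩
    simp only [hNAG] at H
    -- from H : μ * ((1 - μλ)(2β+1)² - 1) ≤ 0, get (1-μλ)(2β+1)² ≤ 1
    have hX : (1 - μ * lam) * (2 * β + 1) ^ 2 ≤ 1 := by
      by_contra hc
      push_neg at hc
      nlinarith [mul_pos hμ (by linarith : (0:ℝ) < (1 - μ * lam) * (2 * β + 1) ^ 2 - 1)]
    -- (s(2β+1))² ≤ 1 and s(2β+1) > 0 give s(2β+1) ≤ 1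
    have hA : s * (2 * β + 1) ≤ 1 := by
      nlinarith [sq_nonneg (s * (2 * β + 1) - 1)]
    rw [le_div_iff₀ (by linarith)]
    -- β * (2(1-μλ)) = 2βs² and s²(2β+1) ≤ s
    nlinarith [mul_le_mul_of_nonneg_left hA hs0.le]
  · rintro ⟨-, hβle⟩
    intro u hu
    refine le_trans (key u hu) ?_
    rw [le_div_iff₀ (by linarith)] at hβle
    -- 2β(1-μλ) ≤ -1 + μλ + s, i.e. s²(2β+1) ≤ s, divide by s : s(2β+1) ≤ 1
    have hA : s * (2 * β + 1) ≤ 1 := by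
      have h1 : s * (s * (2 * β + 1)) ≤ s * 1 := by nlinarith
      exact le_of_mul_le_mul_left h1 hs0
    have hX : (1 - μ * lam) * (2 * β + 1) ^ 2 ≤ 1 := by
      nlinarith [mul_le_mul hA hA (by positivity) (by linarith)]
    simp only [hNAG]
    nlinarith [mul_nonneg hμ.le (by linarith : (0:ℝ) ≤ 1 - (1 - μ * lam) * (2 * β + 1) ^ 2)]
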